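/- (Operator-linear reduction of a product of one integral with an m-fold iterated integral.) Let P_α, P_{β₁}, …, P_{β_m} be separable Volterra operators with nonvanishing kernel factors and twists τ_ω as above. For continuous a, f, g₁, …, g_m: a·P_α(f)·P_{β₁}(g₁·P_{β₂}(g₂·⋯·P_{β_m}(g_m)⋯)) = τ_{β₁}·a·P_α(τ_{β₁}⁻¹·f·P_{β₁}(g₁·⋯P_{β_m}(g_m)⋯)) + Σ_{i=1}^{m-1} τ_α·a·P_{β₁}(g₁·⋯P_{β_{i-1}}(g_{i-1}·P_{β_i}(τ_α⁻¹·g_i·τ_{β_{i+1}}·P_α(τ_{β_{i+1}}⁻¹·f·P_{β_{i+1}}(g_{i+1}·⋯P_{β_m}(g_m)⋯))))⋯) + τ_α·a·P_{β₁}(g₁·⋯P_{β_{m-1}}(g_{m-1}·P_{β_m}(τ_α⁻¹·g_m·P_α(f)))⋯), and each term on the right-hand side is an iterated (operator-linear) integral. -/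

import Mathlib

/-- The separable Volterra operator with kernel `K(x,t) = k(x)h(t)`. -/
noncomputable def volterraP (k h f : ℝ → ℝ) (x : ℝ) : ℝ :=
  ∫ t in (0:ℝ)..x, k x * h t * f t

/-- `chainFrom k h g w i r` is the iterated integral
`g_i · P_{β_{i+1}}(g_{i+1} · ⋯ P_{β_{i+r}}(w)⋯)` built from the chain of
operators `P_{β_j}` with kernels `k j · h j`, with innermost integrand `w`. -/
noncomputable def chainFrom (k h g : ℕ → ℝ → ℝ) (w : ℝ → ℝ) : ℕ → ℕ → ℝ → ℝ
  | _, 0 => w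
  | i, r + 1 => fun x =>
      g i x * volterraP (k (i + 1)) (h (i + 1)) (chainFrom k h g w (i + 1) r) x

open intervalIntegral MeasureTheory

lemma hasDerivAt_primitive (F : ℝ → ℝ) (hF : Continuous F) (y : ℝ) :
    HasDerivAt (fun u => ∫ t in (0:ℝ)..u, F t) (F y) y :=
  integral_hasDerivAt_right (hF.intervalIntegrable _ _)
    hF.aestronglyMeasurable.stronglyMeasurableAtFilter hF.continuousAt

lemma continuous_primitive' (F : ℝ → ℝ) (hF : Continuous F) :
    Continuous (fun u => ∫ t in (0:ℝ)..u, F t) :=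
  intervalIntegral.continuous_primitive (fun _ _ => hF.intervalIntegrable _ _) 0

lemma prod_primitive (F G : ℝ → ℝ) (hF : Continuous F) (hG : Continuous G) (x : ℝ) :
    (∫ t in (0:ℝ)..x, F t) * (∫ t in (0:ℝ)..x, G t) =
      ∫ t in (0:ℝ)..x, (F t * ∫ u in (0:ℝ)..t, G u) + (G t * ∫ u in (0:ℝ)..t, F u) := by
  have hA := continuous_primitive' F hF
  have hB := continuous_primitive' G hG
  have key : ∀ y ∈ Set.uIcc (0:ℝ) x,
      HasDerivAt (fun u => (∫ t in (0:ℝ)..u, F t) * (∫ t in (0:ℝ)..u, G t))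
        ((F y * ∫ u in (0:ℝ)..y, G u) + (G y * ∫ u in (0:ℝ)..y, F u)) y := by
    intro y _
    have := (hasDerivAt_primitive F hF y).mul (hasDerivAt_primitive G hG y)
    exact this.congr_deriv (by ring)
  have hint : IntervalIntegrable
      (fun t => (F t * ∫ u in (0:ℝ)..t, G u) + (G t * ∫ u in (0:ℝ)..t, F u)) volume 0 x :=
    ((hF.mul hB).add (hG.mul hA)).intervalIntegrable _ _
  have := intervalIntegral.integral_eq_sub_of_hasDerivAt key hint
  simp at this
  linarith [this]

lemma volterraP_eq (k h f : ℝ → ℝ) (x : ℝ) :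
    volterraP k h f x = k x * ∫ t in (0:ℝ)..x, h t * f t := by
  rw [volterraP, ← intervalIntegral.integral_const_mul]
  congr 1; ext t; ring

lemma continuous_volterraP (k h f : ℝ → ℝ) (hk : Continuous k) (hh : Continuous h)
    (hf : Continuous f) : Continuous (volterraP k h f) := by
  have : volterraP k h f = fun x => k x * ∫ t in (0:ℝ)..x, h t * f t := by
    ext x; exact volterraP_eq k h f x
  rw [this]
  exact hk.mul (continuous_primitive' _ (hh.mul hf))

lemma volterraP_congr {k h f₁ f₂ : ℝ → ℝ} (hf : ∀ t, f₁ t = f₂ t) :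
    volterraP k h f₁ = volterraP k h f₂ := by
  have : f₁ = f₂ := funext hf
  rw [this]

/-- Twisted Rota–Baxter identity for separable Volterra operators. -/
lemma twisted_RB (kα hα kβ hβ f G : ℝ → ℝ)
    (hkα : Continuous kα) (hhα : Continuous hα) (hkβ : Continuous kβ) (hhβ : Continuous hβ)
    (hf : Continuous f) (hG : Continuous G)
    (hkα0 : ∀ x, kα x ≠ 0) (hkβ0 : ∀ x, kβ x ≠ 0) (x : ℝ) :
    volterraP kα hα f x * volterraP kβ hβ G x =
      (kβ x / kβ 0) * volterraP kα hα
          (fun t => (kβ t / kβ 0)⁻¹ * f t * volterraP kβ hβ G t) x +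
      (kα x / kα 0) * volterraP kβ hβ
          (fun t => (kα t / kα 0)⁻¹ * G t * volterraP kα hα f t) x := by
  have hF : Continuous (fun t => hα t * f t) := hhα.mul hf
  have hG' : Continuous (fun t => hβ t * G t) := hhβ.mul hG
  have hA := continuous_primitive' _ hF
  have hB := continuous_primitive' _ hG'
  rw [volterraP_eq kα hα f x, volterraP_eq kβ hβ G x, volterraP_eq, volterraP_eq]
  have key := prod_primitive _ _ hF hG' x
  have e1 : (∫ t in (0:ℝ)..x, hα t * ((kβ t / kβ 0)⁻¹ * f t * volterraP kβ hβ G t))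
      = kβ 0 * ∫ t in (0:ℝ)..x, hα t * f t * ∫ u in (0:ℝ)..t, hβ u * G u := by
    rw [← intervalIntegral.integral_const_mul]
    congr 1; ext t
    rw [volterraP_eq]
    field_simp [hkβ0 t, hkβ0 0]
  have e2 : (∫ t in (0:ℝ)..x, hβ t * ((kα t / kα 0)⁻¹ * G t * volterraP kα hα f t))
      = kα 0 * ∫ t in (0:ℝ)..x, hβ t * G t * ∫ u in (0:ℝ)..t, hα u * f u := by
    rw [← intervalIntegral.integral_const_mul]
    congr 1; ext t
    rw [volterraP_eq]
    field_simp [hkα0 t, hkα0 0]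
  rw [e1, e2]
  have sum_split : (∫ t in (0:ℝ)..x,
        ((hα t * f t) * ∫ u in (0:ℝ)..t, hβ u * G u) + ((hβ t * G t) * ∫ u in (0:ℝ)..t, hα u * f u))
      = (∫ t in (0:ℝ)..x, (hα t * f t) * ∫ u in (0:ℝ)..t, hβ u * G u)
        + (∫ t in (0:ℝ)..x, (hβ t * G t) * ∫ u in (0:ℝ)..t, hα u * f u) :=
    intervalIntegral.integral_add ((hF.mul hB).intervalIntegrable _ _)
      ((hG'.mul hA).intervalIntegrable _ _)
  rw [sum_split] at key
  have h1 : (∫ t in (0:ℝ)..x, hα t * f t * ∫ u in (0:ℝ)..t, hβ u * G u)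
      = ∫ t in (0:ℝ)..x, (hα t * f t) * ∫ u in (0:ℝ)..t, hβ u * G u := by
    congr 1
  have hβ0 := hkβ0 0
  have hα0 := hkα0 0
  field_simp
  linear_combination (kα x * kβ x) * key
lemma chainFrom_shift (k h g : ℕ → ℝ → ℝ) (w : ℝ → ℝ) :
    ∀ r i, chainFrom (fun j => k (j + 1)) (fun j => h (j + 1)) (fun j => g (j + 1)) w i r
      = chainFrom k h g w (i + 1) r := by
  intro r
  induction r with
  | zero => intro i; rfl
  | succ r ih =>
    intro i
    show (fun x => g (i + 1) x * volterraP (k (i + 1 + 1)) (h (i + 1 + 1))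
        (chainFrom (fun j => k (j + 1)) (fun j => h (j + 1)) (fun j => g (j + 1)) w (i + 1) r) x)
      = _
    rw [ih (i + 1)]
    rfl

lemma continuous_chainFrom (k h g : ℕ → ℝ → ℝ) (w : ℝ → ℝ)
    (hk : ∀ j, Continuous (k j)) (hh : ∀ j, Continuous (h j)) (hg : ∀ j, Continuous (g j))
    (hw : Continuous w) : ∀ r i, Continuous (chainFrom k h g w i r) := by
  intro r
  induction r with
  | zero => intro i; exact hw
  | succ r ih =>
    intro i
    show Continuous (fun x => g i x * volterraP (k (i + 1)) (h (i + 1)) (chainFrom k h g w (i + 1) r) x)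
    exact (hg i).mul (continuous_volterraP _ _ _ (hk _) (hh _) (ih _))

lemma volterraP_add (k h f₁ f₂ : ℝ → ℝ) (hk : Continuous k) (hh : Continuous h)
    (hf₁ : Continuous f₁) (hf₂ : Continuous f₂) (x : ℝ) :
    volterraP k h (fun t => f₁ t + f₂ t) x = volterraP k h f₁ x + volterraP k h f₂ x := by
  unfold volterraP
  rw [← intervalIntegral.integral_add
    (((continuous_const.fun_mul hh).fun_mul hf₁).intervalIntegrable _ _ : IntervalIntegrable (fun t => k x * h t * f₁ t) _ _ _)
    (((continuous_const.fun_mul hh).fun_mul hf₂).intervalIntegrable _ _)]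
  congr 1; ext t; ring

lemma volterraP_sum {ι : Type*} (s : Finset ι) (k h : ℝ → ℝ) (F : ι → ℝ → ℝ)
    (hk : Continuous k) (hh : Continuous h) (hF : ∀ i ∈ s, Continuous (F i)) (x : ℝ) :
    volterraP k h (fun t => ∑ i ∈ s, F i t) x = ∑ i ∈ s, volterraP k h (F i) x := by
  unfold volterraP
  rw [← intervalIntegral.integral_finset_sum
    (fun i hi => (((continuous_const.fun_mul hh).fun_mul (hF i hi)).intervalIntegrable _ _ :
      IntervalIntegrable (fun t => k x * h t * F i t) _ _ _))]
  congr 1; ext t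
  rw [Finset.mul_sum]

lemma chainFrom_zero (k h g : ℕ → ℝ → ℝ) (w : ℝ → ℝ) (i : ℕ) :
    chainFrom k h g w i 0 = w := rfl

lemma chainFrom_succ (k h g : ℕ → ℝ → ℝ) (w : ℝ → ℝ) (i r : ℕ) :
    chainFrom k h g w i (r + 1)
      = fun x => g i x * volterraP (k (i + 1)) (h (i + 1)) (chainFrom k h g w (i + 1) r) x := rfl

lemma reduction_aux : ∀ (d : ℕ) (kα hα : ℝ → ℝ) (k h g : ℕ → ℝ → ℝ) (a f : ℝ → ℝ),
    Continuous kα → Continuous hα → (∀ j, Continuous (k j)) → (∀ j, Continuous (h j)) →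
    (∀ j, Continuous (g j)) → Continuous a → Continuous f →
    (∀ x, kα x ≠ 0) → (∀ j x, k j x ≠ 0) → ∀ x : ℝ,
    a x * volterraP kα hα f x * volterraP (k 1) (h 1) (chainFrom k h g (g (d + 1)) 1 d) x =
      (k 1 x / k 1 0) * a x * volterraP kα hα
          (fun t => (k 1 t / k 1 0)⁻¹ * f t *
            volterraP (k 1) (h 1) (chainFrom k h g (g (d + 1)) 1 d) t) x +
      (∑ j ∈ Finset.range d,
        (kα x / kα 0) * a x * volterraP (k 1) (h 1)
          (chainFrom k h g
            (fun t => (kα t / kα 0)⁻¹ * g (j + 1) t * (k (j + 2) t / k (j + 2) 0) *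
              volterraP kα hα
                (fun u => (k (j + 2) u / k (j + 2) 0)⁻¹ * f u *
                  volterraP (k (j + 2)) (h (j + 2))
                    (chainFrom k h g (g (d + 1)) (j + 2) (d - 1 - j)) u) t)
            1 j) x) +
      (kα x / kα 0) * a x * volterraP (k 1) (h 1)
          (chainFrom k h g (fun t => (kα t / kα 0)⁻¹ * g (d + 1) t * volterraP kα hα f t) 1 d) x := by
  intro d
  induction d with
  | zero =>
    intro kα hα k h g a f hkα hhα hk hh hg ha hf hkα0 hk0 x
    simp only [Finset.range_zero, Finset.sum_empty, chainFrom_zero]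
    have RB := twisted_RB kα hα (k 1) (h 1) f (g (0 + 1)) hkα hhα (hk 1) (hh 1) hf
      (hg (0 + 1)) hkα0 (hk0 1) x
    linear_combination a x * RB
  | succ d IH =>
    intro kα hα k h g a f hkα hhα hk hh hg ha hf hkα0 hk0 x
    rw [Finset.sum_range_succ']
    simp only [zero_add, Nat.add_sub_cancel, Nat.sub_zero, Nat.add_assoc, Nat.reduceAdd,
      chainFrom_zero]
    have hτinv : Continuous fun t => (kα t / kα 0)⁻¹ := by
      simp only [inv_div]; exact continuous_const.div hkα hkα0
    have hτk : ∀ j : ℕ, Continuous fun t => (k j t / k j 0)⁻¹ := fun j => by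
      simp only [inv_div]; exact continuous_const.div (hk j) (hk0 j)
    have hPα : Continuous (volterraP kα hα f) := continuous_volterraP _ _ _ hkα hhα hf
    have hCH : Continuous (chainFrom k h g (g (d + 2)) 1 (d + 1)) :=
      continuous_chainFrom k h g _ hk hh hg (hg _) _ _
    have RB := twisted_RB kα hα (k 1) (h 1) f (chainFrom k h g (g (d + 2)) 1 (d + 1))
      hkα hhα (hk 1) (hh 1) hf hCH hkα0 (hk0 1) x
    have IH' := IH kα hα (fun j => k (j + 1)) (fun j => h (j + 1)) (fun j => g (j + 1))
      (fun t => (kα t / kα 0)⁻¹ * g 1 t) f hkα hhα (fun j => hk (j + 1)) (fun j => hh (j + 1))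
      (fun j => hg (j + 1)) (hτinv.mul (hg 1)) hf hkα0 (fun j => hk0 (j + 1))
    simp only [chainFrom_shift, Nat.add_assoc, Nat.reduceAdd] at IH'
    -- continuity of the pieces
    have hV : ∀ j : ℕ, Continuous (fun u => (kα u / kα 0)⁻¹ * g (j + 2) u *
        (k (j + 3) u / k (j + 3) 0) *
        volterraP kα hα
          (fun v => (k (j + 3) v / k (j + 3) 0)⁻¹ * f v *
            volterraP (k (j + 3)) (h (j + 3))
              (chainFrom k h g (g (d + 2)) (j + 3) (d - (j + 1))) v) u) := fun j =>
      ((hτinv.mul (hg _)).mul ((hk _).div_const _)).mul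
        (continuous_volterraP _ _ _ hkα hhα (((hτk _).mul hf).mul
          (continuous_volterraP _ _ _ (hk _) (hh _)
            (continuous_chainFrom _ _ _ _ hk hh hg (hg _) _ _))))
    have hV0 : Continuous (fun u => (kα u / kα 0)⁻¹ * g 1 u * (k 2 u / k 2 0) *
        volterraP kα hα
          (fun v => (k 2 v / k 2 0)⁻¹ * f v *
            volterraP (k 2) (h 2) (chainFrom k h g (g (d + 2)) 2 d) v) u) :=
      ((hτinv.mul (hg _)).mul ((hk _).div_const _)).mul
        (continuous_volterraP _ _ _ hkα hhα (((hτk _).mul hf).mul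
          (continuous_volterraP _ _ _ (hk _) (hh _)
            (continuous_chainFrom _ _ _ _ hk hh hg (hg _) _ _))))
    have hL : Continuous (fun u => (kα u / kα 0)⁻¹ * g (d + 2) u * volterraP kα hα f u) :=
      (hτinv.mul (hg _)).mul hPα
    have hc : ∀ t : ℝ, kα t / kα 0 * (kα t / kα 0)⁻¹ = 1 := fun t =>
      mul_inv_cancel₀ (div_ne_zero (hkα0 t) (hkα0 0))
    -- pointwise decomposition of the second Rota–Baxter term
    have hkey : ∀ t : ℝ,
        (kα t / kα 0)⁻¹ * chainFrom k h g (g (d + 2)) 1 (d + 1) t * volterraP kα hα f t =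
          ((∑ j ∈ Finset.range d,
              chainFrom k h g
                (fun u => (kα u / kα 0)⁻¹ * g (j + 2) u * (k (j + 3) u / k (j + 3) 0) *
                  volterraP kα hα
                    (fun v => (k (j + 3) v / k (j + 3) 0)⁻¹ * f v *
                      volterraP (k (j + 3)) (h (j + 3))
                        (chainFrom k h g (g (d + 2)) (j + 3) (d - (j + 1))) v) u)
                1 (j + 1) t) +
            ((kα t / kα 0)⁻¹ * g 1 t * (k 2 t / k 2 0) *
              volterraP kα hα
                (fun u => (k 2 u / k 2 0)⁻¹ * f u *
                  volterraP (k 2) (h 2) (chainFrom k h g (g (d + 2)) 2 d) u) t)) +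
          chainFrom k h g (fun u => (kα u / kα 0)⁻¹ * g (d + 2) u * volterraP kα hα f u)
            1 (d + 1) t := by
      intro t
      have E := IH' t
      simp only [chainFrom_succ, chainFrom_zero, Nat.reduceAdd]
      have hsum : (∑ j ∈ Finset.range d,
            g 1 t * volterraP (k 2) (h 2)
              (chainFrom k h g
                (fun u => (kα u / kα 0)⁻¹ * g (j + 2) u * (k (j + 3) u / k (j + 3) 0) *
                  volterraP kα hα
                    (fun v => (k (j + 3) v / k (j + 3) 0)⁻¹ * f v *
                      volterraP (k (j + 3)) (h (j + 3))
                        (chainFrom k h g (g (d + 2)) (j + 3) (d - (j + 1))) v) u)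
                2 j) t)
          = ∑ j ∈ Finset.range d,
            kα t / kα 0 * ((kα t / kα 0)⁻¹ * g 1 t) * volterraP (k 2) (h 2)
              (chainFrom k h g
                (fun u => (kα u / kα 0)⁻¹ * g (j + 2) u * (k (j + 3) u / k (j + 3) 0) *
                  volterraP kα hα
                    (fun v => (k (j + 3) v / k (j + 3) 0)⁻¹ * f v *
                      volterraP (k (j + 3)) (h (j + 3))
                        (chainFrom k h g (g (d + 2)) (j + 3) (d - 1 - j)) v) u)
                2 j) t := by
        refine Finset.sum_congr rfl fun j hj => ?_
        have ee : d - 1 - j = d - (j + 1) := by omega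
        rw [ee, ← mul_assoc, hc t, one_mul]
      rw [hsum]
      linear_combination E + (g 1 t * volterraP (k 2) (h 2)
        (chainFrom k h g (fun u => (kα u / kα 0)⁻¹ * g (d + 2) u * volterraP kα hα f u)
          2 d) t) * hc t
    -- split the Volterra operator along the decomposition
    have hsplit : volterraP (k 1) (h 1)
        (fun t => (kα t / kα 0)⁻¹ * chainFrom k h g (g (d + 2)) 1 (d + 1) t *
          volterraP kα hα f t) x
      = ((∑ j ∈ Finset.range d, volterraP (k 1) (h 1)
            (chainFrom k h g
              (fun u => (kα u / kα 0)⁻¹ * g (j + 2) u * (k (j + 3) u / k (j + 3) 0) *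
                volterraP kα hα
                  (fun v => (k (j + 3) v / k (j + 3) 0)⁻¹ * f v *
                    volterraP (k (j + 3)) (h (j + 3))
                      (chainFrom k h g (g (d + 2)) (j + 3) (d - (j + 1))) v) u)
              1 (j + 1)) x)
          + volterraP (k 1) (h 1)
              (fun u => (kα u / kα 0)⁻¹ * g 1 u * (k 2 u / k 2 0) *
                volterraP kα hα
                  (fun v => (k 2 v / k 2 0)⁻¹ * f v *
                    volterraP (k 2) (h 2) (chainFrom k h g (g (d + 2)) 2 d) v) u) x)
        + volterraP (k 1) (h 1)
            (chainFrom k h g (fun u => (kα u / kα 0)⁻¹ * g (d + 2) u * volterraP kα hα f u)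
              1 (d + 1)) x := by
      have hS : Continuous (fun t => ∑ j ∈ Finset.range d,
          chainFrom k h g
            (fun u => (kα u / kα 0)⁻¹ * g (j + 2) u * (k (j + 3) u / k (j + 3) 0) *
              volterraP kα hα
                (fun v => (k (j + 3) v / k (j + 3) 0)⁻¹ * f v *
                  volterraP (k (j + 3)) (h (j + 3))
                    (chainFrom k h g (g (d + 2)) (j + 3) (d - (j + 1))) v) u)
            1 (j + 1) t) :=
        continuous_finset_sum _ fun j _ => continuous_chainFrom _ _ _ _ hk hh hg (hV j) _ _
      have hLC : Continuous (chainFrom k h g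
          (fun u => (kα u / kα 0)⁻¹ * g (d + 2) u * volterraP kα hα f u) 1 (d + 1)) :=
        continuous_chainFrom _ _ _ _ hk hh hg hL _ _
      rw [volterraP_congr hkey,
        volterraP_add (k 1) (h 1) _ _ (hk 1) (hh 1) (hS.fun_add hV0) hLC x,
        volterraP_add (k 1) (h 1) _ _ (hk 1) (hh 1) hS hV0 x,
        volterraP_sum (Finset.range d) (k 1) (h 1) _ (hk 1) (hh 1)
          (fun j _ => continuous_chainFrom _ _ _ _ hk hh hg (hV j) _ _) x]
    rw [← Finset.mul_sum]
    linear_combination a x * RB + (kα x / kα 0 * a x) * hsplit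

/-- Operator-linear reduction of the product of a single integral `P_α(f)` with
an `m`-fold iterated integral `P_{β₁}(g₁·P_{β₂}(g₂·⋯·P_{β_m}(g_m)⋯))`. -/
theorem reduction_single_times_iterated
    (m : ℕ) (hm : 1 ≤ m)
    (kα hα : ℝ → ℝ) (k h g : ℕ → ℝ → ℝ) (a f : ℝ → ℝ)
    (hkα : Continuous kα) (hhα : Continuous hα)
    (hk : ∀ j, Continuous (k j)) (hh : ∀ j, Continuous (h j))
    (hg : ∀ j, Continuous (g j)) (ha : Continuous a) (hf : Continuous f)
    (hkα0 : ∀ x, kα x ≠ 0) (hk0 : ∀ j x, k j x ≠ 0) :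
    let τα : ℝ → ℝ := fun x => kα x / kα 0
    let τ : ℕ → ℝ → ℝ := fun j x => k j x / k j 0
    ∀ x : ℝ,
      a x * volterraP kα hα f x *
          volterraP (k 1) (h 1) (chainFrom k h g (g m) 1 (m - 1)) x =
        τ 1 x * a x * volterraP kα hα
            (fun t => (τ 1 t)⁻¹ * f t *
              volterraP (k 1) (h 1) (chainFrom k h g (g m) 1 (m - 1)) t) x +
        (∑ i ∈ Finset.Icc 1 (m - 1),
          τα x * a x * volterraP (k 1) (h 1)
            (chainFrom k h g
              (fun t => (τα t)⁻¹ * g i t * τ (i + 1) t *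
                volterraP kα hα
                  (fun u => (τ (i + 1) u)⁻¹ * f u *
                    volterraP (k (i + 1)) (h (i + 1))
                      (chainFrom k h g (g m) (i + 1) (m - 1 - i)) u) t)
              1 (i - 1)) x) +
        τα x * a x * volterraP (k 1) (h 1)
            (chainFrom k h g
              (fun t => (τα t)⁻¹ * g m t * volterraP kα hα f t)
              1 (m - 1)) x := by
  intro τα τ x
  obtain ⟨d, rfl⟩ : ∃ d, m = d + 1 := ⟨m - 1, by omega⟩
  simp only [τα, τ, Nat.add_sub_cancel]
  have A := reduction_aux d kα hα k h g a f hkα hhα hk hh hg ha hf hkα0 hk0 x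
  rw [A, ← Finset.Ico_add_one_right_eq_Icc, Finset.sum_Ico_eq_sum_range]
  simp only [Nat.add_sub_cancel]
  congr 1
  · congr 1
    refine Finset.sum_congr rfl fun j hj => ?_
    have e1 : 1 + j = j + 1 := by omega
    have e2 : d - (j + 1) = d - 1 - j := by omega
    rw [e1, e2]
    simp only [Nat.add_assoc, Nat.reduceAdd, Nat.add_sub_cancel]
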